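/- arXiv:1806.06805 — 9 statements merged into one kernel-verified Lean document; each statement's English description precedes it below -/
import Mathlib

section
/- For every real number λ, det(λP + S) = −(1/(4a²b²))·[λ⁴ + (4z_c + a² + b²)λ³ + (4z_c(a² + b²) − 4(x_c² + y_c² − r²) + a²b²)λ² + 4(z_c a²b² − y_c² a² − x_c² b² + r²(a² + b²))λ] − r². -/
open Matrix Polynomial

/-- The 4×4 matrix of the elliptic paraboloid x²/a² + y²/b² - z = 0. -/
noncomputable def Pmat (a b : ℝ) : Matrix (Fin 4) (Fin 4) ℝ :=
  !![1/a^2, 0, 0, 0;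
     0, 1/b^2, 0, 0;
     0, 0, 0, -(1/2 : ℝ);
     0, 0, -(1/2 : ℝ), 0]

/-- The 4×4 matrix of the sphere (x-x_c)² + (y-y_c)² + (z-z_c)² = r². -/
noncomputable def Smat (xc yc zc r : ℝ) : Matrix (Fin 4) (Fin 4) ℝ :=
  !![1, 0, 0, -xc;
     0, 1, 0, -yc;
     0, 0, 1, -zc;
     -xc, -yc, -zc, xc^2 + yc^2 + zc^2 - r^2]

/- `l • P + S` is an arrowhead matrix: diagonal in the first three coordinates, bordered by a last
row and column. Expanding such a determinant along the border gives a closed form, and clearing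
the denominators `a²`, `b²` turns it into the stated quartic in `l`. -/

theorem Matrix.det_arrowhead_fin_four {R : Type*} [CommRing R] (d₁ d₂ d₃ u₁ u₂ u₃ v₁ v₂ v₃ e : R) :
    !![d₁, 0, 0, u₁;
       0, d₂, 0, u₂;
       0, 0, d₃, u₃;
       v₁, v₂, v₃, e].det =
      d₁ * d₂ * d₃ * e - u₁ * v₁ * d₂ * d₃ - u₂ * v₂ * d₁ * d₃ - u₃ * v₃ * d₁ * d₂ := by
  rw [det_succ_row_zero]
  simp [Fin.sum_univ_succ, det_fin_three, show Fin.succAbove (3 : Fin 4) 2 = 2 from rfl]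
  ring

theorem smul_Pmat_add_Smat (a b xc yc zc r l : ℝ) :
    l • Pmat a b + Smat xc yc zc r =
      !![l / a^2 + 1, 0, 0, -xc;
         0, l / b^2 + 1, 0, -yc;
         0, 0, 1, -(l / 2 + zc);
         -xc, -yc, -(l / 2 + zc), xc^2 + yc^2 + zc^2 - r^2] := by
  ext i j
  fin_cases i <;> fin_cases j <;> simp [Pmat, Smat] <;> ring

theorem det_pencil_eq_general (a b r xc yc zc : ℝ) (ha : 0 < a) (hab : a ≤ b)
    (l : ℝ) :
    (l • Pmat a b + Smat xc yc zc r).det =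
      -(1/(4*a^2*b^2)) *
        (l^4 + (4*zc + a^2 + b^2) * l^3
          + (4*zc*(a^2 + b^2) - 4*(xc^2 + yc^2 - r^2) + a^2*b^2) * l^2
          + 4*(zc*a^2*b^2 - yc^2*a^2 - xc^2*b^2 + r^2*(a^2 + b^2)) * l)
      - r^2 := by
  have ha₀ : a ≠ 0 := ha.ne'
  have hb₀ : b ≠ 0 := (ha.trans_le hab).ne'
  rw [smul_Pmat_add_Smat, det_arrowhead_fin_four]
  field_simp
  ring

/-- explicit expansion of det(λP + S). -/
theorem det_pencil_eq (a b r xc yc zc : ℝ) (ha : 0 < a) (hab : a ≤ b) (hr : 0 < r)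
    (l : ℝ) :
    (l • Pmat a b + Smat xc yc zc r).det =
      -(1/(4*a^2*b^2)) *
        (l^4 + (4*zc + a^2 + b^2) * l^3
          + (4*zc*(a^2 + b^2) - 4*(xc^2 + yc^2 - r^2) + a^2*b^2) * l^2
          + 4*(zc*a^2*b^2 - yc^2*a^2 - xc^2*b^2 + r^2*(a^2 + b^2)) * l)
      - r^2 :=
  det_pencil_eq_general a b r xc yc zc ha hab l
end

section
/- The polynomial p(λ) = −4a²b²·f(λ) is monic of degree 4 with constant coefficient p(0) = 4a²b²r² > 0; consequently the product of the four complex roots of f (counted with multiplicity) equals 4a²b²r². -/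
open Matrix Polynomial

/-- The characteristic polynomial f(λ) = det(λP + S), as a real polynomial in λ. -/
noncomputable def charPoly (a b xc yc zc r : ℝ) : Polynomial ℝ :=
  Matrix.det ((X : Polynomial ℝ) • (Pmat a b).map C + (Smat xc yc zc r).map C)

/-!
`λP + S` is an arrowhead matrix: it is diagonal, with diagonal `1 + λ/a², 1 + λ/b², 1`, apart from
its last row and column, which carry `-x_c, -y_c, -(λ/2 + z_c)` and `k = x_c² + y_c² + z_c² - r²`.
Its determinant is therefore a Schur complement, and multiplying by `-4a²b²` clears the denominators:
`-4a²b² f(λ) = (λ + a²)(λ + b²)((λ + 2z_c)² - 4k) + 4a²x_c²(λ + b²) + 4b²y_c²(λ + a²)`,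
a monic quartic whose value at `0` is `4a²b²r²`. Over `ℂ` it splits, so Vieta's formula gives the
product of its roots, and these are the roots of `f`.
-/

namespace Polynomial

theorem roots_map_C_mul {K L : Type*} [Field K] [CommRing L] [IsDomain L]
    (f : K →+* L) (p : K[X]) {c : K} (hc : c ≠ 0) :
    ((C c * p).map f).roots = (p.map f).roots := by
  rw [Polynomial.map_mul, map_C, roots_C_mul _ ((map_ne_zero_iff f f.injective).mpr hc)]

theorem Monic.prod_roots_map {A L : Type*} [CommRing A] [Field L] [IsAlgClosed L] {q : A[X]}
    (hq : q.Monic) (f : A →+* L) :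
    (q.map f).roots.prod = (-1) ^ q.natDegree * f (q.coeff 0) := by
  have vieta := (IsAlgClosed.splits (q.map f)).coeff_zero_eq_prod_roots_of_monic (hq.map f)
  rw [coeff_map, hq.natDegree_map] at vieta
  rw [vieta, ← mul_assoc, ← mul_pow, neg_one_mul, neg_neg, one_pow, one_mul]

end Polynomial

section CharPoly

variable (a b xc yc zc r : ℝ)

theorem eval_charPoly (x : ℝ) :
    (charPoly a b xc yc zc r).eval x = det (x • Pmat a b + Smat xc yc zc r) := by
  rw [charPoly, ← coe_evalRingHom, RingHom.map_det]
  congr 1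
  ext i j
  simp only [RingHom.mapMatrix_apply, coe_evalRingHom, map_apply, Matrix.add_apply,
    Matrix.smul_apply, smul_eq_mul, eval_add, eval_mul, eval_C, eval_X]

theorem det_smul_Pmat_add_Smat (x : ℝ) :
    det (x • Pmat a b + Smat xc yc zc r) =
      (1 + x / a ^ 2) * (1 + x / b ^ 2) * (xc ^ 2 + yc ^ 2 + zc ^ 2 - r ^ 2 - (x / 2 + zc) ^ 2)
        - (1 + x / b ^ 2) * xc ^ 2 - (1 + x / a ^ 2) * yc ^ 2 := by
  rw [det_succ_row_zero, Fin.sum_univ_four]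
  simp [Pmat, Smat, det_fin_three, Fin.succAbove]
  ring

variable {a b} in
theorem C_mul_charPoly_eq (ha : a ≠ 0) (hb : b ≠ 0) :
    C (-(4 * a ^ 2 * b ^ 2)) * charPoly a b xc yc zc r =
      (X + C (a ^ 2)) * (X + C (b ^ 2)) *
          ((X + C (2 * zc)) ^ 2 - C (4 * (xc ^ 2 + yc ^ 2 + zc ^ 2 - r ^ 2)))
        + C (4 * a ^ 2 * xc ^ 2) * (X + C (b ^ 2)) + C (4 * b ^ 2 * yc ^ 2) * (X + C (a ^ 2)) := by
  refine Polynomial.funext fun x => ?_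
  simp only [eval_mul, eval_C, eval_charPoly, det_smul_Pmat_add_Smat, eval_add, eval_sub,
    eval_pow, eval_X]
  field_simp
  ring

end CharPoly

/-- p(λ) = -4a²b²·f(λ) is monic of degree 4 with p(0) = 4a²b²r² > 0,
and the product of the four complex characteristic roots (with multiplicity)
equals 4a²b²r². -/
theorem charPoly_monic_and_root_prod (a b r xc yc zc : ℝ)
    (ha : 0 < a) (hab : a ≤ b) (hr : 0 < r) :
    (C (-(4*a^2*b^2)) * charPoly a b xc yc zc r).Monic ∧
    (C (-(4*a^2*b^2)) * charPoly a b xc yc zc r).natDegree = 4 ∧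
    (C (-(4*a^2*b^2)) * charPoly a b xc yc zc r).eval 0 = 4*a^2*b^2*r^2 ∧
    0 < 4*a^2*b^2*r^2 ∧
    Multiset.card (((charPoly a b xc yc zc r).map (algebraMap ℝ ℂ)).roots) = 4 ∧
    (((charPoly a b xc yc zc r).map (algebraMap ℝ ℂ)).roots).prod
      = ((4*a^2*b^2*r^2 : ℝ) : ℂ) := by
  have hb : 0 < b := ha.trans_le hab
  have hp := C_mul_charPoly_eq xc yc zc r ha.ne' hb.ne'
  have hc : -(4*a^2*b^2) ≠ 0 := neg_ne_zero.mpr (by positivity)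
  have hmonic : (C (-(4*a^2*b^2)) * charPoly a b xc yc zc r).Monic := by
    rw [hp]; monicity!
  have hdeg : (C (-(4*a^2*b^2)) * charPoly a b xc yc zc r).natDegree = 4 := by
    rw [hp]; compute_degree!
  have heval : (C (-(4*a^2*b^2)) * charPoly a b xc yc zc r).eval 0 = 4*a^2*b^2*r^2 := by
    rw [hp]; simp only [eval_add, eval_sub, eval_mul, eval_pow, eval_X, eval_C, zero_add]; ring
  refine ⟨hmonic, hdeg, heval, by positivity, ?_, ?_⟩
  · rw [← roots_map_C_mul _ _ hc, IsAlgClosed.card_roots_map_eq_natDegree_from_simpleRing, hdeg]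
  · rw [← roots_map_C_mul _ _ hc, hmonic.prod_roots_map, hdeg, coeff_zero_eq_eval_zero, heval]
    norm_num
end

section
/- If x_c = 0 and y_c = 0, then f(λ) = −(1/(4a²b²))·(λ + a²)(λ + b²)(λ² + 4z_c λ + 4r²) for all real λ; in particular, when z_c² ≥ r², the two roots of the quadratic factor are λ₃ = −2(z_c + √(z_c² − r²)) and λ₄ = −2(z_c − √(z_c² − r²)). -/
open Matrix Polynomial

/-- when the center is on the OZ-axis, f factorizes as
-(1/(4a²b²))(λ+a²)(λ+b²)(λ²+4z_cλ+4r²); when z_c² ≥ r² the roots of the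
quadratic factor are λ₃ = -2(z_c+√(z_c²-r²)) and λ₄ = -2(z_c-√(z_c²-r²)). -/
theorem charPoly_factorization_center_on_axis (a b r zc : ℝ)
    (ha : 0 < a) (hab : a ≤ b) (hr : 0 < r) :
    (∀ l : ℝ, (charPoly a b 0 0 zc r).eval l =
      -(1/(4*a^2*b^2)) * ((l + a^2) * (l + b^2) * (l^2 + 4*zc*l + 4*r^2))) ∧
    (zc^2 ≥ r^2 → ∀ l : ℝ,
      l^2 + 4*zc*l + 4*r^2 = 0 ↔
        (l = -2*(zc + Real.sqrt (zc^2 - r^2)) ∨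
         l = -2*(zc - Real.sqrt (zc^2 - r^2)))) := by
  have ha' : a ≠ 0 := ne_of_gt ha
  have hb' : b ≠ 0 := ne_of_gt (lt_of_lt_of_le ha hab)
  constructor
  · intro l
    rw [charPoly, Pmat, Smat]
    simp only [Matrix.det_succ_row_zero, Fin.sum_univ_succ, Finset.univ_unique,
      Fin.default_eq_zero, Finset.sum_singleton, Fin.sum_univ_zero]
    simp [Matrix.add_apply, Matrix.smul_apply, Matrix.map_apply, Fin.succAbove,
      smul_eq_mul]
    field_simp
    ring
  · intro hz l
    have hs : Real.sqrt (zc^2 - r^2) ^ 2 = zc^2 - r^2 :=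
      Real.sq_sqrt (by linarith)
    constructor
    · intro h
      have key : (l + 2*(zc + Real.sqrt (zc^2 - r^2))) *
          (l + 2*(zc - Real.sqrt (zc^2 - r^2))) = 0 := by
        nlinarith [hs]
      rcases mul_eq_zero.mp key with h1 | h1
      · left; linarith
      · right; linarith
    · rintro (h | h) <;> subst h <;> nlinarith [hs]
end

section
/- Assume x_c = 0, y_c = 0 and 2r ≤ a². Then 𝒮 is interior to 𝒫 if and only if z_c > r, and 𝒮 is exterior to 𝒫 if and only if z_c < −r. -/
/-!
Every point of the sphere has height `z ∈ [z_c - r, z_c + r]`, and the two poles `(0, 0, z_c ± r)`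
attain the bounds, so the poles decide both properties; exteriority follows at once from
`z ≤ z_c + r < 0`. For interiority the smallness condition makes the lower pole the critical point:
writing `t = z - z_c ∈ [-r, r]`, the squared distance to the axis is
`(r - t)(r + t) ≤ 2r (r + t) ≤ a² (r + t) < a² z` when `z_c > r`, and `b ≥ a` gives
`x²/a² + y²/b² ≤ (x² + y²)/a²`.
-/

open Matrix Polynomial

def onParaboloid (a b x y z : ℝ) : Prop := x^2/a^2 + y^2/b^2 - z = 0

def onSphere (xc yc zc r x y z : ℝ) : Prop :=
  (x - xc)^2 + (y - yc)^2 + (z - zc)^2 = r^2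

lemma onSphere_sub_radius (xc yc zc r : ℝ) : onSphere xc yc zc r xc yc (zc - r) := by
  simp [onSphere]

lemma onSphere_add_radius (xc yc zc r : ℝ) : onSphere xc yc zc r xc yc (zc + r) := by
  simp [onSphere]

section

variable {xc yc zc r x y z : ℝ}

lemma onSphere.sq_sub_center_le (h : onSphere xc yc zc r x y z) : (z - zc) ^ 2 ≤ r ^ 2 := by
  unfold onSphere at h
  nlinarith [sq_nonneg (x - xc), sq_nonneg (y - yc)]

lemma onSphere.sub_radius_le (h : onSphere xc yc zc r x y z) (hr : 0 ≤ r) : zc - r ≤ z := by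
  linarith [(abs_le_of_sq_le_sq' h.sq_sub_center_le hr).1]

lemma onSphere.le_add_radius (h : onSphere xc yc zc r x y z) (hr : 0 ≤ r) : z ≤ zc + r := by
  linarith [(abs_le_of_sq_le_sq' h.sq_sub_center_le hr).2]

lemma onSphere.sq_add_sq_lt_mul {a : ℝ} (h : onSphere 0 0 zc r x y z) (hr : 0 ≤ r)
    (hzc : r < zc) (ha : 0 < a) (hsmall : 2 * r ≤ a ^ 2) : x ^ 2 + y ^ 2 < a ^ 2 * z := by
  have hdist : x ^ 2 + y ^ 2 = (r - (z - zc)) * (r + (z - zc)) := by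
    unfold onSphere at h; linear_combination h
  have hlow : 0 ≤ r + (z - zc) := by linarith [h.sub_radius_le hr]
  have hhigh : r - (z - zc) ≤ 2 * r := by linarith [h.sub_radius_le hr]
  calc x ^ 2 + y ^ 2 = (r - (z - zc)) * (r + (z - zc)) := hdist
    _ ≤ a ^ 2 * (r + (z - zc)) := by gcongr; linarith
    _ < a ^ 2 * z := by gcongr; linarith

end

lemma div_sq_add_div_sq_le {a b : ℝ} (ha : 0 < a) (hab : a ≤ b) (x y : ℝ) :
    x ^ 2 / a ^ 2 + y ^ 2 / b ^ 2 ≤ (x ^ 2 + y ^ 2) / a ^ 2 := by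
  rw [add_div]
  gcongr

/-- for a sphere centered on the OZ-axis under the smallness
condition 2r ≤ a², the sphere is interior to the paraboloid iff z_c > r and
exterior iff z_c < -r. -/
theorem interior_exterior_iff_center_on_axis (a b r zc : ℝ)
    (ha : 0 < a) (hab : a ≤ b) (hr : 0 < r) (hsmall : 2*r ≤ a^2) :
    ((∀ x y z : ℝ, onSphere 0 0 zc r x y z → x^2/a^2 + y^2/b^2 - z < 0) ↔ r < zc) ∧
    ((∀ x y z : ℝ, onSphere 0 0 zc r x y z → 0 < x^2/a^2 + y^2/b^2 - z) ↔ zc < -r) := by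
  refine ⟨⟨fun h => ?_, fun hzc x y z hs => ?_⟩, ⟨fun h => ?_, fun hzc x y z hs => ?_⟩⟩
  · have hpole := h 0 0 (zc - r) (onSphere_sub_radius 0 0 zc r)
    norm_num at hpole
    linarith
  · have hz : (x ^ 2 + y ^ 2) / a ^ 2 < z := by
      rw [div_lt_iff₀ (by positivity), mul_comm]
      exact hs.sq_add_sq_lt_mul hr.le hzc ha hsmall
    linarith [div_sq_add_div_sq_le ha hab x y]
  · have hpole := h 0 0 (zc + r) (onSphere_add_radius 0 0 zc r)
    norm_num at hpole
    linarith
  · have hnonneg : 0 ≤ x ^ 2 / a ^ 2 + y ^ 2 / b ^ 2 := by positivity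
    linarith [hs.le_add_radius hr.le]
end

section
/- Assume x_c = 0, y_c = 0 and 2r ≤ a². Then 𝒮 and 𝒫 are tangent at some point if and only if |z_c| = r; moreover, in that case the only tangency point is (0,0,0), and f has a real root of multiplicity at least 2, namely −2r if z_c = r and 2r if z_c = −r. -/
open Matrix Polynomial

/-- The sphere and the paraboloid are tangent at the point (x,y,z):
with X = (x,y,z,1)ᵗ one has XᵗPX = 0, XᵗSX = 0 and for every Y,
YᵗPX = 0 iff YᵗSX = 0 (same tangent plane). -/
def TangentAt (a b xc yc zc r x y z : ℝ) : Prop :=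
  ![x, y, z, 1] ⬝ᵥ (Pmat a b).mulVec ![x, y, z, 1] = 0 ∧
  ![x, y, z, 1] ⬝ᵥ (Smat xc yc zc r).mulVec ![x, y, z, 1] = 0 ∧
  ∀ Y : Fin 4 → ℝ,
    Y ⬝ᵥ (Pmat a b).mulVec ![x, y, z, 1] = 0 ↔
    Y ⬝ᵥ (Smat xc yc zc r).mulVec ![x, y, z, 1] = 0

set_option maxHeartbeats 1000000 in
lemma keylem (a b r zc x y z : ℝ) (ha : 0 < a) (hab : a ≤ b) (hr : 0 < r)
    (hsmall : 2*r ≤ a^2) (h : TangentAt a b 0 0 zc r x y z) :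
    x = 0 ∧ y = 0 ∧ z = 0 ∧ zc^2 = r^2 := by
  have hb : 0 < b := lt_of_lt_of_le ha hab
  have ha2 : (a:ℝ)^2 ≠ 0 := by positivity
  have hb2 : (b:ℝ)^2 ≠ 0 := by positivity
  obtain ⟨hP, hS, hY⟩ := h
  simp [Pmat, Smat, Matrix.mulVec, dotProduct, Fin.sum_univ_four,
    Matrix.vecHead, Matrix.vecTail] at hP hS hY
  have h1 := (hY ![1, 0, 2*x/a^2, 0]).mp (by simp; field_simp; ring)
  have h2 := (hY ![0, 1, 2*y/b^2, 0]).mp (by simp; field_simp; ring)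
  have h3 := (hY ![0, 0, -z, 1]).mp (by simp; ring)
  simp at h1 h2 h3
  -- h1 : x + 2 * x / a ^ 2 * (z + -zc) = 0
  -- h2 : y + 2 * y / b ^ 2 * (z + -zc) = 0
  -- h3 : -(z * (z + -zc)) + (-(zc * z) + (zc ^ 2 - r ^ 2)) = 0
  have hz2 : z^2 = zc^2 - r^2 := by linear_combination -h3
  have h4ra : 4*r^2 ≤ a^4 := by nlinarith
  have hab2 : a^2 ≤ b^2 := by nlinarith
  have h4rb : 4*r^2 ≤ b^4 := by nlinarith [mul_le_mul hab2 hab2 (by positivity : (0:ℝ) ≤ a^2) (by positivity : (0:ℝ) ≤ b^2)]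
  have hP' : x^2/a^2 + y^2/b^2 - z = 0 := by linear_combination hP
  have hx : x = 0 := by
    by_contra hx0
    have h1' : x * (a^2 + 2*z - 2*zc) = 0 := by
      field_simp at h1
      linear_combination h1
    rcases mul_eq_zero.mp h1' with h' | h'
    · exact hx0 h'
    · have hzpos : 0 < z := by
        have e1 : 0 < x^2/a^2 := by positivity
        have e2 : 0 ≤ y^2/b^2 := by positivity
        linarith [hP']
      have hzc : zc = z + a^2/2 := by linarith
      rw [hzc] at hz2
      have hkey : a^2*z + a^4/4 = r^2 := by linear_combination -hz2
      have ha2z : 0 < a^2*z := by positivity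
      linarith
  have hy : y = 0 := by
    by_contra hy0
    have h2' : y * (b^2 + 2*z - 2*zc) = 0 := by
      field_simp at h2
      linear_combination h2
    rcases mul_eq_zero.mp h2' with h' | h'
    · exact hy0 h'
    · have hzpos : 0 < z := by
        have e1 : 0 ≤ x^2/a^2 := by positivity
        have e2 : 0 < y^2/b^2 := by positivity
        linarith [hP']
      have hzc : zc = z + b^2/2 := by linarith
      rw [hzc] at hz2
      have hkey : b^2*z + b^4/4 = r^2 := by linear_combination -hz2
      have hb2z : 0 < b^2*z := by positivity
      linarith
  subst hx; subst hy
  have hz : z = 0 := by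
    simp at hP
    linarith
  subst hz
  refine ⟨rfl, rfl, rfl, ?_⟩
  nlinarith [hz2]

set_option maxHeartbeats 1000000 in
/-- for a sphere centered on the OZ-axis under the smallness
condition, tangency holds iff |z_c| = r; the only tangency point is the origin,
and f has a double root -2r (if z_c = r), resp. 2r (if z_c = -r). -/
theorem tangency_center_on_axis (a b r zc : ℝ)
    (ha : 0 < a) (hab : a ≤ b) (hr : 0 < r) (hsmall : 2*r ≤ a^2) :
    ((∃ x y z : ℝ, TangentAt a b 0 0 zc r x y z) ↔ |zc| = r) ∧
    (∀ x y z : ℝ, TangentAt a b 0 0 zc r x y z → x = 0 ∧ y = 0 ∧ z = 0) ∧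
    (zc = r → 2 ≤ rootMultiplicity (-(2*r)) (charPoly a b 0 0 zc r)) ∧
    (zc = -r → 2 ≤ rootMultiplicity (2*r) (charPoly a b 0 0 zc r)) := by
  refine ⟨⟨?_, ?_⟩, ?_, ?_, ?_⟩
  · rintro ⟨x, y, z, hT⟩
    obtain ⟨-, -, -, h4⟩ := keylem a b r zc x y z ha hab hr hsmall hT
    have := abs_nonneg zc
    nlinarith [sq_abs zc]
  · intro habs
    have hzc2 : zc^2 = r^2 := by rw [← sq_abs, habs]
    have hzc0 : zc ≠ 0 := by
      intro h0
      rw [h0] at habs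
      simp at habs
      linarith
    refine ⟨0, 0, 0, ?_, ?_, ?_⟩
    · simp [Pmat, Matrix.mulVec, dotProduct, Fin.sum_univ_four,
        Matrix.vecHead, Matrix.vecTail]
    · simp [Smat, Matrix.mulVec, dotProduct, Fin.sum_univ_four,
        Matrix.vecHead, Matrix.vecTail]
      linarith
    · intro Y
      simp [Pmat, Smat, Matrix.mulVec, dotProduct, Fin.sum_univ_four,
        Matrix.vecHead, Matrix.vecTail, hzc2, hzc0]
  · intro x y z hT
    obtain ⟨h1, h2, h3, -⟩ := keylem a b r zc x y z ha hab hr hsmall hT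
    exact ⟨h1, h2, h3⟩
  · intro hzc
    rw [hzc]
    have hq : charPoly a b 0 0 r r =
        (X - C (-(2*r)))^2 * (C (-(1/4):ℝ) * (C (1/a^2) * X + 1) * (C (1/b^2) * X + 1)) := by
      simp only [charPoly, Pmat, Smat, Matrix.det_succ_row_zero, Fin.sum_univ_succ,
        Matrix.smul_apply, Matrix.add_apply, Matrix.map_apply, smul_eq_mul]
      norm_num [Fin.succAbove, Matrix.vecHead, Matrix.vecTail, map_neg, map_ofNat, _root_.map_mul]
      apply Polynomial.funext
      intro t
      simp
      ring
    have heval : (charPoly a b 0 0 r r).eval 0 = -(r^2) := by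
      rw [hq]
      simp
      try ring
    have hp0 : charPoly a b 0 0 r r ≠ 0 := by
      intro h0
      rw [h0] at heval
      simp at heval
      nlinarith
    rw [Polynomial.le_rootMultiplicity_iff hp0]
    exact ⟨_, hq⟩
  · intro hzc
    rw [hzc]
    have hq : charPoly a b 0 0 (-r) r =
        (X - C (2*r))^2 * (C (-(1/4):ℝ) * (C (1/a^2) * X + 1) * (C (1/b^2) * X + 1)) := by
      simp only [charPoly, Pmat, Smat, Matrix.det_succ_row_zero, Fin.sum_univ_succ,
        Matrix.smul_apply, Matrix.add_apply, Matrix.map_apply, smul_eq_mul]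
      norm_num [Fin.succAbove, Matrix.vecHead, Matrix.vecTail, map_neg, map_ofNat, _root_.map_mul]
      apply Polynomial.funext
      intro t
      simp
      ring
    have heval : (charPoly a b 0 0 (-r) r).eval 0 = -(r^2) := by
      rw [hq]
      simp
      try ring
    have hp0 : charPoly a b 0 0 (-r) r ≠ 0 := by
      intro h0
      rw [h0] at heval
      simp at heval
      nlinarith
    rw [Polynomial.le_rootMultiplicity_iff hp0]
    exact ⟨_, hq⟩
end

section
/- Assume a < b, x_c = 0, y_c = 0 and 2r ≤ a². Then the following are equivalent: (1) 𝒮 and 𝒫 have a common point at which they are not tangent; (2) z_c² < r²; (3) the characteristic polynomial f has a non-real complex root (and then the two non-real roots are complex conjugates of each other). -/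
/-!
Since `a ≤ b`, every point of the paraboloid has `a²z ≤ x² + y²`, so a common point satisfies
`a²z + (z - z_c)² ≤ r²`. If `r² ≤ z_c²`, the smallness condition `2r ≤ a²` forces `z = 0`: the only
possible contact is the vertex, and there the sphere is tangent. If `z_c² < r²`, the section `y = 0`
yields a common point, and `Y = (0, 0, z/2, -1/2)` lies in the tangent plane of the paraboloid but
not of the sphere at any point.

On the algebraic side `f(λ) = (λ/a² + 1)(λ/b² + 1)(-λ²/4 - z_c λ - r²)`, whose only possibly
non-real roots are those of `λ² + 4z_c λ + 4r²`, of discriminant `16(z_c² - r²)`.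
-/

open Matrix Polynomial

lemma exists_pos_quadratic_root_of_neg (p : ℝ) {q : ℝ} (hq : q < 0) :
    ∃ z, 0 < z ∧ z^2 + p * z + q = 0 := by
  have hd : 0 ≤ p^2 - 4*q := by nlinarith [sq_nonneg p]
  refine ⟨(-p + √(p^2 - 4*q)) / 2, ?_, ?_⟩
  · have : |p| < √(p^2 - 4*q) := by
      rw [← Real.sqrt_sq_eq_abs]; exact Real.sqrt_lt_sqrt (sq_nonneg p) (by linarith)
    linarith [le_abs_self p]
  · linear_combination (Real.sq_sqrt hd) / 4

lemma exists_nonreal_quadratic_root_iff (p q : ℝ) :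
    (∃ w : ℂ, w.im ≠ 0 ∧ w^2 + p * w + q = 0) ↔ p^2 < 4 * q := by
  constructor
  · rintro ⟨w, him, hw⟩
    have hre := congrArg Complex.re hw
    have him' := congrArg Complex.im hw
    simp only [pow_two, Complex.add_re, Complex.mul_re, Complex.ofReal_re, Complex.ofReal_im,
      Complex.add_im, Complex.mul_im, Complex.zero_re, Complex.zero_im] at hre him'
    have hu : w.re = -p / 2 := by
      have : w.im * (2 * w.re + p) = 0 := by linear_combination him'
      linarith [(mul_eq_zero.1 this).resolve_left him]
    rw [hu] at hre
    nlinarith [sq_pos_of_ne_zero him]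
  · intro h
    have hd : 0 ≤ q - p^2 / 4 := by linarith
    refine ⟨-p / 2 + √(q - p^2 / 4) * Complex.I, ?_, ?_⟩
    · simpa using (Real.sqrt_pos.2 (by linarith)).ne'
    · have hs : ((√(q - p^2 / 4) : ℝ) : ℂ)^2 = q - p^2 / 4 := by exact_mod_cast Real.sq_sqrt hd
      linear_combination (√(q - p^2 / 4) : ℂ)^2 * Complex.I_sq - hs

lemma isRoot_map_conj {p : ℝ[X]} {w : ℂ} (h : (p.map (algebraMap ℝ ℂ)).IsRoot w) :
    (p.map (algebraMap ℝ ℂ)).IsRoot (starRingEnd ℂ w) := by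
  rw [IsRoot.def, eval_map_algebraMap] at h ⊢
  rw [aeval_conj, h, map_zero]

lemma dotProduct_Pmat_mulVec (a b x y z : ℝ) (Y : Fin 4 → ℝ) :
    Y ⬝ᵥ (Pmat a b).mulVec ![x, y, z, 1]
      = Y 0 * (x / a^2) + Y 1 * (y / b^2) - Y 2 / 2 - Y 3 * (z / 2) := by
  simp only [dotProduct, mulVec, Pmat, one_div, of_apply, cons_val', cons_val_fin_one,
    Fin.sum_univ_four, cons_val_zero, cons_val_one, cons_val, mul_one, zero_mul, add_zero, zero_add,
    mul_neg, neg_mul]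
  ring

lemma dotProduct_Smat_mulVec (xc yc zc r x y z : ℝ) (Y : Fin 4 → ℝ) :
    Y ⬝ᵥ (Smat xc yc zc r).mulVec ![x, y, z, 1]
      = Y 0 * (x - xc) + Y 1 * (y - yc) + Y 2 * (z - zc)
        + Y 3 * (xc^2 + yc^2 + zc^2 - r^2 - xc * x - yc * y - zc * z) := by
  simp only [dotProduct, mulVec, Smat, of_apply, cons_val', cons_val_fin_one, Fin.sum_univ_four,
    cons_val_zero, cons_val_one, cons_val, mul_one, one_mul, zero_mul, add_zero, zero_add, neg_mul]
  ring

lemma tangentAt_origin {a b zc r : ℝ} (hzc : zc ≠ 0) (hzr : zc^2 = r^2) :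
    TangentAt a b 0 0 zc r 0 0 0 := by
  refine ⟨?_, ?_, fun Y => ?_⟩
  · rw [dotProduct_Pmat_mulVec]; simp
  · rw [dotProduct_Smat_mulVec]; simp [hzr]
  · rw [dotProduct_Pmat_mulVec, dotProduct_Smat_mulVec]
    simp [hzr, hzc]

lemma not_tangentAt_of_sq_lt {a b zc r : ℝ} (h : zc^2 < r^2) (x y z : ℝ) :
    ¬ TangentAt a b 0 0 zc r x y z := by
  rintro ⟨-, -, hY⟩
  have hS := (hY ![0, 0, z / 2, -1 / 2]).mp (by rw [dotProduct_Pmat_mulVec]; simp only [cons_val_zero, cons_val_one, cons_val]; ring)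
  rw [dotProduct_Smat_mulVec] at hS
  simp only [cons_val_zero, cons_val_one, cons_val, zero_mul, add_zero, zero_add] at hS
  nlinarith [sq_nonneg z]

lemma sq_mul_le_of_onParaboloid {a b x y z : ℝ} (ha : a ≠ 0) (hab : a^2 ≤ b^2)
    (h : onParaboloid a b x y z) : a^2 * z ≤ x^2 + y^2 := by
  have hb : 0 < b^2 := (by positivity : 0 < a^2).trans_le hab
  calc a^2 * z = x^2 + a^2 / b^2 * y^2 := by
        rw [show z = x^2 / a^2 + y^2 / b^2 by unfold onParaboloid at h; linarith]
        field_simp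
    _ ≤ x^2 + y^2 := by
        gcongr
        exact mul_le_of_le_one_left (sq_nonneg y) (div_le_one_of_le₀ hab hb.le)

lemma nonneg_of_onParaboloid {a b x y z : ℝ} (h : onParaboloid a b x y z) : 0 ≤ z := by
  unfold onParaboloid at h
  have : 0 ≤ x^2/a^2 + y^2/b^2 := by positivity
  linarith

lemma eq_zero_of_sq_mul_add_sq_le {a zc r z : ℝ} (hr : 0 < r) (hsmall : 2*r ≤ a^2)
    (hzr : r^2 ≤ zc^2) (hz : 0 ≤ z) (h : a^2 * z + (z - zc)^2 ≤ r^2) : z = 0 := by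
  rcases le_or_gt (2*zc) (a^2) with hlow | hhigh
  · nlinarith [mul_nonneg hz (sub_nonneg.2 hlow)]
  -- the left side is then at least `a²z_c - a⁴/4 > a⁴/4 ≥ r²`
  · nlinarith [sq_nonneg (2*z + a^2 - 2*zc), mul_lt_mul_of_pos_left hhigh (pow_pos hr 2)]

lemma exists_onSphere_onParaboloid {a zc r : ℝ} (ha : a ≠ 0) (b : ℝ) (h : zc^2 < r^2) :
    ∃ x y z, onSphere 0 0 zc r x y z ∧ onParaboloid a b x y z := by
  obtain ⟨z, hz, hquad⟩ : ∃ z, 0 < z ∧ z^2 + (a^2 - 2*zc) * z + (zc^2 - r^2) = 0 :=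
    exists_pos_quadratic_root_of_neg (a^2 - 2*zc) (by linarith)
  have hx : (a * √z)^2 = a^2 * z := by rw [mul_pow, Real.sq_sqrt hz.le]
  refine ⟨a * √z, 0, z, ?_, ?_⟩
  · unfold onSphere
    linear_combination hquad + hx
  · unfold onParaboloid
    rw [hx]
    field_simp
    ring

lemma eq_origin_of_onSphere_onParaboloid {a b zc r x y z : ℝ} (ha : a ≠ 0) (hab : a^2 ≤ b^2)
    (hr : 0 < r) (hsmall : 2*r ≤ a^2) (hzr : r^2 ≤ zc^2)
    (hS : onSphere 0 0 zc r x y z) (hP : onParaboloid a b x y z) : x = 0 ∧ y = 0 ∧ z = 0 := by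
  unfold onSphere at hS
  simp only [sub_zero] at hS
  have hz : z = 0 := eq_zero_of_sq_mul_add_sq_le hr hsmall hzr (nonneg_of_onParaboloid hP)
    (by linarith [sq_mul_le_of_onParaboloid ha hab hP])
  subst hz
  have hx : x^2 = 0 := by nlinarith [sq_nonneg x, sq_nonneg y]
  have hy : y^2 = 0 := by nlinarith [sq_nonneg x, sq_nonneg y]
  exact ⟨pow_eq_zero_iff two_ne_zero |>.1 hx, pow_eq_zero_iff two_ne_zero |>.1 hy, rfl⟩

lemma exists_nontangent_contact_iff {a b zc r : ℝ} (ha : a ≠ 0) (hab : a^2 ≤ b^2)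
    (hr : 0 < r) (hsmall : 2*r ≤ a^2) :
    (∃ x y z : ℝ, onSphere 0 0 zc r x y z ∧ onParaboloid a b x y z ∧
        ¬ TangentAt a b 0 0 zc r x y z) ↔ zc^2 < r^2 := by
  constructor
  · rintro ⟨x, y, z, hS, hP, hnt⟩
    by_contra! hzr
    obtain ⟨rfl, rfl, rfl⟩ := eq_origin_of_onSphere_onParaboloid ha hab hr hsmall hzr hS hP
    have hzc : zc^2 = r^2 := by unfold onSphere at hS; linear_combination hS
    exact hnt (tangentAt_origin (by rintro rfl; nlinarith) hzc)
  · intro h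
    obtain ⟨x, y, z, hS, hP⟩ := exists_onSphere_onParaboloid ha b h
    exact ⟨x, y, z, hS, hP, not_tangentAt_of_sq_lt h x y z⟩

lemma eval_map_charPoly (a b zc r : ℝ) (w : ℂ) :
    ((charPoly a b 0 0 zc r).map (algebraMap ℝ ℂ)).eval w =
      (w / a^2 + 1) * (w / b^2 + 1) * (-(w^2 / 4) - zc * w - r^2) := by
  rw [eval_map_algebraMap, charPoly, AlgHom.map_det]
  have hM : ((X : ℝ[X]) • (Pmat a b).map C + (Smat 0 0 zc r).map C).map (aeval w) =
      !![w / a^2 + 1, 0, 0, 0;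
         0, w / b^2 + 1, 0, 0;
         0, 0, 1, -(w / 2) - zc;
         0, 0, -(w / 2) - zc, zc^2 - r^2] := by
    ext i j
    fin_cases i <;> fin_cases j <;> simp [Pmat, Smat] <;> ring
  rw [AlgHom.mapMatrix_apply, hM, det_succ_row_zero]
  simp only [of_apply, cons_val', cons_val_fin_one, cons_val_zero, cons_val_one, cons_val,
    cons_val_succ, det_fin_three, submatrix_apply, Fin.sum_univ_succ, Fin.succ_zero_eq_one,
    Fin.succ_one_eq_two, Fin.coe_ofNat_eq_mod, Nat.zero_mod, pow_zero, one_mul, mul_one, mul_zero,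
    zero_mul, sub_zero, add_zero, Fin.zero_succAbove, Fin.val_succ, Fin.succ_succAbove_one,
    Finset.sum_const_zero]
  ring

lemma isRoot_map_charPoly_iff {a b : ℝ} (ha : a ≠ 0) (hb : b ≠ 0) (zc r : ℝ) (w : ℂ) :
    ((charPoly a b 0 0 zc r).map (algebraMap ℝ ℂ)).IsRoot w ↔
      w = -a^2 ∨ w = -b^2 ∨ w^2 + 4 * zc * w + 4 * r^2 = 0 := by
  have ha2 : (a : ℂ)^2 ≠ 0 := by exact_mod_cast pow_ne_zero 2 ha
  have hb2 : (b : ℂ)^2 ≠ 0 := by exact_mod_cast pow_ne_zero 2 hb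
  rw [IsRoot.def, eval_map_charPoly, mul_eq_zero, mul_eq_zero, div_add_one ha2, div_add_one hb2,
    div_eq_zero_iff, div_eq_zero_iff, or_iff_left ha2, or_iff_left hb2, add_eq_zero_iff_eq_neg,
    add_eq_zero_iff_eq_neg, or_assoc]
  exact or_congr_right (or_congr_right
    ⟨fun h => by linear_combination -4 * h, fun h => by linear_combination -h / 4⟩)

lemma exists_nonreal_isRoot_map_charPoly_iff {a b : ℝ} (ha : a ≠ 0) (hb : b ≠ 0)
    (zc r : ℝ) :
    (∃ w : ℂ, w.im ≠ 0 ∧ ((charPoly a b 0 0 zc r).map (algebraMap ℝ ℂ)).IsRoot w) ↔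
      zc^2 < r^2 := by
  have key : ∀ w : ℂ, w.im ≠ 0 → (((charPoly a b 0 0 zc r).map (algebraMap ℝ ℂ)).IsRoot w ↔
      w^2 + ((4 * zc : ℝ) : ℂ) * w + ((4 * r^2 : ℝ) : ℂ) = 0) := by
    intro w hw
    rw [isRoot_map_charPoly_iff ha hb]
    push_cast
    constructor
    · rintro (rfl | rfl | h)
      · simp [← Complex.ofReal_pow] at hw
      · simp [← Complex.ofReal_pow] at hw
      · linear_combination h
    · intro h; exact Or.inr (Or.inr (by linear_combination h))
  calc (∃ w : ℂ, w.im ≠ 0 ∧ ((charPoly a b 0 0 zc r).map (algebraMap ℝ ℂ)).IsRoot w)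
      ↔ ∃ w : ℂ, w.im ≠ 0 ∧ w^2 + ((4 * zc : ℝ) : ℂ) * w + ((4 * r^2 : ℝ) : ℂ) = 0 :=
        exists_congr fun w => and_congr_right (key w)
    _ ↔ (4 * zc)^2 < 4 * (4 * r^2) := exists_nonreal_quadratic_root_iff _ _
    _ ↔ zc^2 < r^2 := by constructor <;> intro h <;> linarith

/-- for a < b, center on the OZ-axis and smallness condition:
non-tangent contact ⟺ z_c² < r² ⟺ f has a non-real complex root; and the
non-real roots come in conjugate pairs. -/
theorem nontangent_contact_center_on_axis (a b r zc : ℝ)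
    (ha : 0 < a) (hab : a < b) (hr : 0 < r) (hsmall : 2*r ≤ a^2) :
    ((∃ x y z : ℝ, onSphere 0 0 zc r x y z ∧ onParaboloid a b x y z ∧
        ¬ TangentAt a b 0 0 zc r x y z) ↔ zc^2 < r^2) ∧
    (zc^2 < r^2 ↔ ∃ w : ℂ, w.im ≠ 0 ∧
        ((charPoly a b 0 0 zc r).map (algebraMap ℝ ℂ)).IsRoot w) ∧
    (∀ w : ℂ, ((charPoly a b 0 0 zc r).map (algebraMap ℝ ℂ)).IsRoot w → w.im ≠ 0 →
        ((charPoly a b 0 0 zc r).map (algebraMap ℝ ℂ)).IsRoot ((starRingEnd ℂ) w)) := by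
  have hab2 : a^2 ≤ b^2 := pow_le_pow_left₀ ha.le hab.le 2
  exact ⟨exists_nontangent_contact_iff ha.ne' hab2 hr hsmall,
    (exists_nonreal_isRoot_map_charPoly_iff ha.ne' (ha.trans hab).ne' zc r).symm,
    fun _ hw _ => isRoot_map_conj hw⟩
end

section
/- Let n ≥ 1 and let α₀, α₁, …, αₙ : [t₀, t₁] → ℝ be continuous functions with αₙ(t) ≠ 0 for every t ∈ [t₀, t₁], and for each t define the real polynomial p_t(λ) = αₙ(t)λⁿ + αₙ₋₁(t)λⁿ⁻¹ + ⋯ + α₁(t)λ + α₀(t). If p_{t₀} has n distinct real roots and p_{t₁} has some non-real complex root, then there exists t_d ∈ (t₀, t₁) such that p_{t_d} has a real root of multiplicity at least 2. -/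
/-!
Let `S` be the set of times `t` at which `p t` has `n` distinct real roots, and `T = sup S`.
Simple real roots persist under small perturbations: each one is witnessed by a sign change of
`p t` on a short interval, the sign change survives for nearby times, and the intermediate value
theorem turns it back into a root. Hence `S` extends to the right of each of its points below `t₁`,
and in particular `t₀ < T`. The root tuples at times of `S` near `T` are bounded by Cauchy's bound,
so a limit tuple `r` gives `p T = a_n(T) ∏ᵢ (X - rᵢ)`. Then all complex roots of `p T` are real,
so `T < t₁`; and `r` is not injective, since otherwise `T ∈ S` and `S` would extend past `T`.
Two equal entries of `r` are a multiple real root of `p T`.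
-/

open Polynomial Filter Topology Set

theorem Function.Injective.exists_pos_forall_lt_abs_sub {ι : Type*} [Finite ι] {r : ι → ℝ}
    (hr : Function.Injective r) : ∃ ε > 0, ∀ i j, i ≠ j → ε < |r i - r j| := by
  have : ∀ᶠ ε in 𝓝 (0 : ℝ), ∀ i j, i ≠ j → ε < |r i - r j| :=
    eventually_all.2 fun i => eventually_all.2 fun j => by
      by_cases hij : i = j
      · exact Eventually.of_forall fun _ h => absurd hij h
      · exact (eventually_lt_nhds (abs_pos.2 (sub_ne_zero.2 (hr.ne hij)))).mono fun _ h _ => h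
  exact this.exists_gt

namespace Polynomial

def HasDistinctRoots {K : Type*} [Field K] (q : K[X]) (n : ℕ) : Prop :=
  ∃ r : Fin n → K, Function.Injective r ∧ ∀ i, q.IsRoot (r i)

variable {n : ℕ}

section Field

variable {K : Type*} [Field K]

theorem eq_C_leadingCoeff_mul_prod_of_injective {q : K[X]} {r : Fin n → K}
    (hdeg : q.natDegree = n) (hr : Function.Injective r) (hroot : ∀ i, q.IsRoot (r i)) :
    q = C q.leadingCoeff * ∏ i, (X - C (r i)) := by
  refine eq_leadingCoeff_mul_of_monic_of_dvd_of_natDegree_le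
    (monic_prod_of_monic _ _ fun i _ => monic_X_sub_C (r i)) ?_ ?_
  · exact Finset.prod_dvd_of_coprime ((pairwise_coprime_X_sub_C hr).set_pairwise _)
      fun i _ => dvd_iff_isRoot.2 (hroot i)
  · rw [natDegree_prod_of_monic _ _ fun i _ => monic_X_sub_C (r i)]
    simp [hdeg]

theorem hasDistinctRoots_of_eq_C_mul_prod {q : K[X]} {c : K} {r : Fin n → K}
    (hq : q = C c * ∏ i, (X - C (r i))) (hr : Function.Injective r) : q.HasDistinctRoots n :=
  ⟨r, hr, fun i => by simp [hq, eval_prod, Finset.prod_eq_zero (Finset.mem_univ i)]⟩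

theorem two_le_rootMultiplicity_of_eq_C_mul_prod {q : K[X]} {c : K} {r : Fin n → K}
    (hq : q = C c * ∏ i, (X - C (r i))) (hc : c ≠ 0) {i j : Fin n} (hij : i ≠ j)
    (hr : r i = r j) : 2 ≤ rootMultiplicity (r i) q := by
  have hq0 : q ≠ 0 := hq ▸ mul_ne_zero (C_ne_zero.2 hc)
    (monic_prod_of_monic _ _ fun i _ => monic_X_sub_C (r i)).ne_zero
  rw [le_rootMultiplicity_iff hq0, hq]
  refine Dvd.dvd.mul_left ?_ _
  calc (X - C (r i)) ^ 2 = ∏ k ∈ {i, j}, (X - C (r k)) := by rw [Finset.prod_pair hij, ← hr, sq]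
    _ ∣ ∏ k, (X - C (r k)) := Finset.prod_dvd_prod_of_subset _ _ _ (Finset.subset_univ _)

end Field

theorem im_eq_zero_of_isRoot_map_of_eq_C_mul_prod {q : ℝ[X]} {c : ℝ} {r : Fin n → ℝ}
    (hq : q = C c * ∏ i, (X - C (r i))) (hc : c ≠ 0) {w : ℂ}
    (hw : (q.map (algebraMap ℝ ℂ)).IsRoot w) : w.im = 0 := by
  simp only [hq, IsRoot, Polynomial.map_mul, Polynomial.map_prod, Polynomial.map_sub, map_C,
    map_X, eval_mul, eval_C, eval_prod, eval_sub, eval_X, mul_eq_zero, map_eq_zero, hc,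
    false_or, Finset.prod_eq_zero_iff, sub_eq_zero] at hw
  obtain ⟨i, -, rfl⟩ := hw
  exact Complex.ofReal_im (r i)

theorem exists_isRoot_mem_Icc_of_eval_mul_eval_neg (q : ℝ[X]) {a b : ℝ} (hab : a ≤ b)
    (h : eval a q * eval b q < 0) : ∃ x ∈ Icc a b, q.IsRoot x := by
  have hcont := q.continuous.continuousOn (s := Icc a b)
  rcases mul_neg_iff.1 h with ⟨ha, hb⟩ | ⟨ha, hb⟩
  · exact intermediate_value_Icc' hab hcont ⟨hb.le, ha.le⟩
  · exact intermediate_value_Icc hab hcont ⟨ha.le, hb.le⟩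

theorem eval_sub_mul_eval_add_neg_of_eq_C_mul_prod {q : ℝ[X]} {c : ℝ} {r : Fin n → ℝ}
    (hq : q = C c * ∏ i, (X - C (r i))) (hc : c ≠ 0) {ε : ℝ} (hε : 0 < ε)
    (hsep : ∀ i j, i ≠ j → ε < |r i - r j|) (j : Fin n) :
    eval (r j - ε) q * eval (r j + ε) q < 0 := by
  have hfactor : ∀ i, (r j - ε - r i) * (r j + ε - r i) = (r j - r i) ^ 2 - ε ^ 2 := fun i => by
    ring
  have hpos : ∀ i ∈ Finset.univ.erase j, 0 < (r j - r i) ^ 2 - ε ^ 2 := fun i hi => by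
    have h := hsep j i (Finset.ne_of_mem_erase hi).symm
    nlinarith [sq_abs (r j - r i), abs_nonneg (r j - r i)]
  have hprod : ∏ i, ((r j - r i) ^ 2 - ε ^ 2) < 0 := by
    rw [← Finset.mul_prod_erase _ _ (Finset.mem_univ j), sub_self]
    exact mul_neg_of_neg_of_pos (by nlinarith) (Finset.prod_pos hpos)
  calc eval (r j - ε) q * eval (r j + ε) q
      = c ^ 2 * ∏ i, ((r j - ε - r i) * (r j + ε - r i)) := by
        simp only [hq, eval_mul, eval_C, eval_prod, eval_sub, eval_X, Finset.prod_mul_distrib]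
        ring
    _ < 0 := by
      simp only [hfactor]
      exact mul_neg_of_pos_of_neg (by positivity) hprod

theorem hasDistinctRoots_of_eval_mul_eval_neg {q : ℝ[X]} {r : Fin n → ℝ} {ε : ℝ} (hε : 0 < ε)
    (hsep : ∀ i j, i ≠ j → 2 * ε < |r i - r j|)
    (hsign : ∀ j, eval (r j - ε) q * eval (r j + ε) q < 0) : q.HasDistinctRoots n := by
  choose x hx hroot using fun j =>
    exists_isRoot_mem_Icc_of_eval_mul_eval_neg q (by linarith) (hsign j)
  refine ⟨x, fun i j hxij => by_contra fun hij => ?_, hroot⟩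
  have hi := hx i
  have hj := hx j
  rw [hxij, mem_Icc] at hi
  rw [mem_Icc] at hj
  exact (hsep i j hij).not_ge (abs_sub_le_iff.2 ⟨by linarith, by linarith⟩)

theorem HasDistinctRoots.eventually_of_tendsto_eval {α : Type*} {l : Filter α} {p : α → ℝ[X]}
    {q : ℝ[X]} (hq : q.HasDistinctRoots n) (hdeg : q.degree = n)
    (hp : ∀ x, Tendsto (fun a => eval x (p a)) l (𝓝 (eval x q))) :
    ∀ᶠ a in l, (p a).HasDistinctRoots n := by
  obtain ⟨r, hr, hroot⟩ := hq
  have hfac :=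
    eq_C_leadingCoeff_mul_prod_of_injective (natDegree_eq_of_degree_eq_some hdeg) hr hroot
  have hc : q.leadingCoeff ≠ 0 := leadingCoeff_ne_zero.2 (by rintro rfl; simp at hdeg)
  obtain ⟨ε, hε, hsep⟩ := hr.exists_pos_forall_lt_abs_sub
  have hsign := eval_sub_mul_eval_add_neg_of_eq_C_mul_prod hfac hc (half_pos hε)
    fun i j hij => by linarith [hsep i j hij]
  filter_upwards [eventually_all.2 fun j => ((hp _).mul (hp _)).eventually_lt_const (hsign j)]
    with a ha
  exact hasDistinctRoots_of_eval_mul_eval_neg (half_pos hε)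
    (fun i j hij => by linarith [hsep i j hij]) ha

theorem isBounded_range_of_isRoot {ι : Type*} {q : ι → ℝ[X]} {R : ι → Fin n → ℝ}
    (hq : ∀ k, q k ≠ 0) (hR : ∀ k i, (q k).IsRoot (R k i))
    (hB : BddAbove (range fun k => cauchyBound (q k))) : Bornology.IsBounded (range R) := by
  obtain ⟨B, hB⟩ := hB
  refine isBounded_iff_forall_norm_le.2 ⟨B, forall_mem_range.2 fun k =>
    (pi_norm_le_iff_of_nonneg B.2).2 fun i => ?_⟩
  exact_mod_cast ((hR k i).norm_lt_cauchyBound (hq k)).le.trans (hB (mem_range_self k))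

theorem exists_eq_C_mul_prod_of_tendsto {q : ℕ → ℝ[X]} {Q : ℝ[X]} {c : ℕ → ℝ} {c₀ : ℝ}
    {R : ℕ → Fin n → ℝ} (hq : ∀ x, Tendsto (fun k => eval x (q k)) atTop (𝓝 (eval x Q)))
    (hc : Tendsto c atTop (𝓝 c₀)) (hR : Bornology.IsBounded (range R))
    (hfac : ∀ k, q k = C (c k) * ∏ i, (X - C (R k i))) :
    ∃ r : Fin n → ℝ, Q = C c₀ * ∏ i, (X - C (r i)) := by
  obtain ⟨r, -, φ, hφ, hr⟩ := tendsto_subseq_of_bounded hR fun k => mem_range_self k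
  refine ⟨r, Polynomial.funext fun x => tendsto_nhds_unique ((hq x).comp hφ.tendsto_atTop) ?_⟩
  have hlim : Tendsto (fun k => c (φ k) * ∏ i, (x - R (φ k) i)) atTop
      (𝓝 (c₀ * ∏ i, (x - r i))) :=
    (hc.comp hφ.tendsto_atTop).mul <| tendsto_finsetProd _ fun i _ =>
      tendsto_const_nhds.sub (tendsto_pi_nhds.1 hr i)
  simpa [hfac, eval_prod, Function.comp_def] using hlim

section Family

variable {α : Type*} [TopologicalSpace α] {s : Set α}

theorem continuousOn_eval_of_degree_le {K : Type*} [NormedField K] {p : α → K[X]}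
    (hdeg : ∀ t ∈ s, (p t).degree ≤ n) (hcoeff : ∀ i, ContinuousOn (fun t => (p t).coeff i) s)
    (x : K) : ContinuousOn (fun t => eval x (p t)) s :=
  (continuousOn_finsetSum (Finset.range (n + 1)) fun i _ =>
    (hcoeff i).mul continuousOn_const).congr fun t ht =>
      eval_eq_sum_range' (Nat.lt_succ_of_le (natDegree_le_of_degree_le (hdeg t ht))) x

theorem continuousOn_leadingCoeff_of_degree_eq {K : Type*} [NormedField K] {p : α → K[X]}
    (hdeg : ∀ t ∈ s, (p t).degree = n) (hcoeff : ∀ i, ContinuousOn (fun t => (p t).coeff i) s) :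
    ContinuousOn (fun t => (p t).leadingCoeff) s :=
  (hcoeff n).congr fun t ht => by rw [leadingCoeff, natDegree_eq_of_degree_eq_some (hdeg t ht)]

theorem continuousOn_cauchyBound_of_degree_eq {K : Type*} [NormedField K] {p : α → K[X]}
    (hdeg : ∀ t ∈ s, (p t).degree = n) (hcoeff : ∀ i, ContinuousOn (fun t => (p t).coeff i) s) :
    ContinuousOn (fun t => cauchyBound (p t)) s := by
  have hlc : ∀ t ∈ s, (p t).leadingCoeff ≠ 0 := fun t ht =>
    leadingCoeff_ne_zero.2 fun h => by simpa [h] using hdeg t ht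
  have hsup : ContinuousOn (fun t => (Finset.range n).sup fun i => ‖(p t).coeff i‖₊) s :=
    ContinuousOn.finset_sup_apply fun i _ => (hcoeff i).nnnorm
  refine ((hsup.div₀ (continuousOn_leadingCoeff_of_degree_eq hdeg hcoeff).nnnorm
    fun t ht => nnnorm_ne_zero_iff.2 (hlc t ht)).add (continuousOn_const (c := 1))).congr
    fun t ht => ?_
  simp [cauchyBound, natDegree_eq_of_degree_eq_some (hdeg t ht)]

theorem HasDistinctRoots.eventually_nhdsWithin {p : α → ℝ[X]}
    (hdeg : ∀ t ∈ s, (p t).degree = n) (hcoeff : ∀ i, ContinuousOn (fun t => (p t).coeff i) s)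
    {t : α} (ht : t ∈ s) (h : (p t).HasDistinctRoots n) :
    ∀ᶠ t' in 𝓝[s] t, (p t').HasDistinctRoots n :=
  h.eventually_of_tendsto_eval (hdeg t ht) fun x =>
    continuousOn_eval_of_degree_le (fun t ht => (hdeg t ht).le) hcoeff x t ht

theorem exists_eq_C_leadingCoeff_mul_prod_of_mem_closure [FrechetUrysohnSpace α] {p : α → ℝ[X]}
    (hdeg : ∀ t ∈ s, (p t).degree = n) (hcoeff : ∀ i, ContinuousOn (fun t => (p t).coeff i) s)
    {T : α} (hT : T ∈ s) (hcl : T ∈ closure {t ∈ s | (p t).HasDistinctRoots n}) :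
    ∃ r : Fin n → ℝ, p T = C (p T).leadingCoeff * ∏ i, (X - C (r i)) := by
  obtain ⟨u, hu, hlim⟩ := mem_closure_iff_seq_limit.1 hcl
  have hlim' : Tendsto u atTop (𝓝[s] T) :=
    tendsto_nhdsWithin_iff.2 ⟨hlim, Eventually.of_forall fun k => (hu k).1⟩
  have hne : ∀ k, p (u k) ≠ 0 := fun k h => by simpa [h] using hdeg _ (hu k).1
  choose R hR hroot using fun k => (hu k).2
  have hbdd : Bornology.IsBounded (range R) := isBounded_range_of_isRoot hne hroot
    ((continuousOn_cauchyBound_of_degree_eq hdeg hcoeff T hT).tendsto.comp hlim').bddAbove_range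
  exact exists_eq_C_mul_prod_of_tendsto (q := p ∘ u)
    (fun x => (continuousOn_eval_of_degree_le (fun t ht => (hdeg t ht).le) hcoeff x T hT).tendsto.comp
      hlim')
    ((continuousOn_leadingCoeff_of_degree_eq hdeg hcoeff T hT).tendsto.comp hlim') hbdd
    fun k => eq_C_leadingCoeff_mul_prod_of_injective
      (natDegree_eq_of_degree_eq_some (hdeg _ (hu k).1)) (hR k) (hroot k)

end Family

theorem HasDistinctRoots.exists_mem_Ioc {p : ℝ → ℝ[X]} {t₀ t₁ : ℝ}
    (hdeg : ∀ t ∈ Icc t₀ t₁, (p t).degree = n)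
    (hcoeff : ∀ i, ContinuousOn (fun t => (p t).coeff i) (Icc t₀ t₁)) {t : ℝ}
    (ht : t ∈ Icc t₀ t₁) (ht₁ : t < t₁) (h : (p t).HasDistinctRoots n) :
    ∃ t' ∈ Ioc t t₁, (p t').HasDistinctRoots n := by
  have hsub : Ioc t t₁ ⊆ Icc t₀ t₁ := Ioc_subset_Icc_self.trans (Icc_subset_Icc_left ht.1)
  have hev := ((h.eventually_nhdsWithin hdeg hcoeff ht).filter_mono (nhdsWithin_mono _ hsub)).and
    self_mem_nhdsWithin
  rw [nhdsWithin_Ioc_eq_nhdsGT ht₁] at hev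
  obtain ⟨t', ht', ht'mem⟩ := hev.exists
  exact ⟨t', ht'mem, ht'⟩

theorem exists_mem_Ioo_two_le_rootMultiplicity {p : ℝ → ℝ[X]} {t₀ t₁ : ℝ} (ht : t₀ < t₁)
    (hdeg : ∀ t ∈ Icc t₀ t₁, (p t).degree = n)
    (hcoeff : ∀ i, ContinuousOn (fun t => (p t).coeff i) (Icc t₀ t₁))
    (h₀ : (p t₀).HasDistinctRoots n)
    (h₁ : ∃ w : ℂ, w.im ≠ 0 ∧ ((p t₁).map (algebraMap ℝ ℂ)).IsRoot w) :
    ∃ t ∈ Ioo t₀ t₁, ∃ x, 2 ≤ rootMultiplicity x (p t) := by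
  set S := {t ∈ Icc t₀ t₁ | (p t).HasDistinctRoots n}
  have ht₀S : t₀ ∈ S := ⟨left_mem_Icc.2 ht.le, h₀⟩
  have hS : BddAbove S := ⟨t₁, fun t ht => ht.1.2⟩
  have hT : sSup S ∈ Icc t₀ t₁ := ⟨le_csSup hS ht₀S, csSup_le ⟨t₀, ht₀S⟩ fun t ht => ht.1.2⟩
  have hright : ∀ t ∈ S, t < t₁ → t < sSup S := fun t ht ht₁ =>
    let ⟨t', ⟨ht', ht'₁⟩, ht'S⟩ := ht.2.exists_mem_Ioc hdeg hcoeff ht.1 ht₁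
    ht'.trans_le (le_csSup hS ⟨⟨ht.1.1.trans ht'.le, ht'₁⟩, ht'S⟩)
  obtain ⟨r, hr⟩ := exists_eq_C_leadingCoeff_mul_prod_of_mem_closure hdeg hcoeff hT
    (csSup_mem_closure ⟨t₀, ht₀S⟩ hS)
  have hc : (p (sSup S)).leadingCoeff ≠ 0 := leadingCoeff_ne_zero.2 fun h => by
    simpa [h] using hdeg _ hT
  have hT₁ : sSup S < t₁ := hT.2.lt_of_ne fun hTt₁ => by
    obtain ⟨w, hw, hroot⟩ := h₁
    rw [← hTt₁] at hroot
    exact hw (im_eq_zero_of_isRoot_map_of_eq_C_mul_prod hr hc hroot)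
  obtain ⟨i, j, hrij, hij⟩ := Function.not_injective_iff.1 fun hinj =>
    (hright _ ⟨hT, hasDistinctRoots_of_eq_C_mul_prod hr hinj⟩ hT₁).false
  exact ⟨sSup S, ⟨hright t₀ ht₀S ht, hT₁⟩, r i,
    two_le_rootMultiplicity_of_eq_C_mul_prod hr hc hij hrij⟩

end Polynomial

theorem multiple_root_along_path_general (n : ℕ) (t0 t1 : ℝ) (ht : t0 < t1)
    (α : ℕ → ℝ → ℝ)
    (hcont : ∀ i ≤ n, ContinuousOn (α i) (Set.Icc t0 t1))
    (hlead : ∀ t ∈ Set.Icc t0 t1, α n t ≠ 0)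
    (p : ℝ → Polynomial ℝ)
    (hp : ∀ t, p t = ∑ i ∈ Finset.range (n + 1), C (α i t) * X ^ i)
    (hroots0 : ∃ s : Finset ℝ, s.card = n ∧ ∀ x ∈ s, (p t0).IsRoot x)
    (hroots1 : ∃ w : ℂ, w.im ≠ 0 ∧ ((p t1).map (algebraMap ℝ ℂ)).IsRoot w) :
    ∃ td ∈ Set.Ioo t0 t1, ∃ x : ℝ, 2 ≤ rootMultiplicity x (p td) := by
  have hcoeff : ∀ t i, (p t).coeff i = if i ≤ n then α i t else 0 := fun t i => by
    simp [hp]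
  obtain ⟨s, hs, hroots⟩ := hroots0
  refine exists_mem_Ioo_two_le_rootMultiplicity ht (fun t ht => ?_) (fun i => ?_)
    ⟨s.orderEmbOfFin hs, (s.orderEmbOfFin hs).injective,
      fun i => hroots _ (s.orderEmbOfFin_mem hs i)⟩ hroots1
  · refine degree_eq_of_le_of_coeff_ne_zero ((degree_le_iff_coeff_zero _ _).2 fun m hm => ?_)
      (by simpa [hcoeff] using hlead t ht)
    simp [hcoeff, Nat.cast_lt.1 hm]
  · by_cases hi : i ≤ n
    · simpa [hcoeff, hi] using hcont i hi
    · simpa [hcoeff, hi] using continuousOn_const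

/-- a continuous family of degree-n polynomials that starts with n
distinct real roots and ends with a non-real root must pass through a
polynomial with a multiple real root. -/
theorem multiple_root_along_path (n : ℕ) (hn : 1 ≤ n) (t0 t1 : ℝ) (ht : t0 < t1)
    (α : ℕ → ℝ → ℝ)
    (hcont : ∀ i ≤ n, ContinuousOn (α i) (Set.Icc t0 t1))
    (hlead : ∀ t ∈ Set.Icc t0 t1, α n t ≠ 0)
    (p : ℝ → Polynomial ℝ)
    (hp : ∀ t, p t = ∑ i ∈ Finset.range (n + 1), C (α i t) * X ^ i)
    (hroots0 : ∃ s : Finset ℝ, s.card = n ∧ ∀ x ∈ s, (p t0).IsRoot x)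
    (hroots1 : ∃ w : ℂ, w.im ≠ 0 ∧ ((p t1).map (algebraMap ℝ ℂ)).IsRoot w) :
    ∃ td ∈ Set.Ioo t0 t1, ∃ x : ℝ, 2 ≤ rootMultiplicity x (p td) :=
  multiple_root_along_path_general n t0 t1 ht α hcont hlead p hp hroots0 hroots1
end

section
/- Assume a < b and 2r ≤ a². If λ is a real root of the characteristic polynomial f with λ ∉ {−a², −b²} and the multiplicity of λ is at least 2, then there exists at least one point at which 𝒮 and 𝒫 are tangent. -/
open Matrix Polynomial

/-!
For `l ∉ {-a², -b²}` the first three rows of `(l P + S) X = 0` have a unique solution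
`X = (x, y, z, 1)`, and the last row then reads `f(l) / D(l)` with `D(l) = (1 + l/a²)(1 + l/b²)`
(a Schur complement). Differentiating `(l P + S) X(l) = (f/D)(l) e₄` and pairing with `X(l)` gives
`Xᵗ P X = (f/D)'(l)`, i.e. `D(l) · Xᵗ P X = f'(l) - (D'/D)(l) f(l)`. So at a double root `l` of `f`,
`X` is an isotropic vector of `P` in the kernel of `l P + S`. Since `f(0) = det S = -r² ≠ 0`, also
`l ≠ 0`, so `S X = -l P X`: the two quadrics pass through `X` with the same tangent plane.
-/

theorem dotProduct_mulVec_eq_zero_iff_of_mulVec_eq_smul {K n : Type*} [CommRing K]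
    [NoZeroDivisors K] [Fintype n] {P S : Matrix n n K} {v : n → K} {μ : K} (hμ : μ ≠ 0)
    (h : S *ᵥ v = μ • P *ᵥ v) (w : n → K) : w ⬝ᵥ P *ᵥ v = 0 ↔ w ⬝ᵥ S *ᵥ v = 0 := by
  rw [h, dotProduct_smul, smul_eq_mul, mul_eq_zero_iff_left hμ]

theorem one_add_div_sq_ne_zero {a l : ℝ} (h : l ≠ -a ^ 2) : 1 + l / a ^ 2 ≠ 0 := by
  rcases eq_or_ne a 0 with rfl | ha
  · simp
  · rw [one_add_div (pow_ne_zero 2 ha)]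
    exact div_ne_zero (fun h' => h (by linarith)) (pow_ne_zero 2 ha)

section Quadrics

variable {a b xc yc zc r x y z l : ℝ}

theorem tangentAt_of_Smat_mulVec_eq_smul {μ : ℝ} (hμ : μ ≠ 0)
    (hSP : Smat xc yc zc r *ᵥ ![x, y, z, 1] = μ • Pmat a b *ᵥ ![x, y, z, 1])
    (hP : ![x, y, z, 1] ⬝ᵥ Pmat a b *ᵥ ![x, y, z, 1] = 0) :
    TangentAt a b xc yc zc r x y z :=
  ⟨hP, by rw [hSP, dotProduct_smul, hP, smul_zero],
    dotProduct_mulVec_eq_zero_iff_of_mulVec_eq_smul hμ hSP⟩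

theorem charPoly_eq (a b xc yc zc r : ℝ) :
    charPoly a b xc yc zc r =
      (1 + C (1 / a ^ 2) * X) * (1 + C (1 / b ^ 2) * X) *
          (C (xc ^ 2 + yc ^ 2 + zc ^ 2 - r ^ 2) - (C zc + C (1 / 2) * X) ^ 2) -
        C (xc ^ 2) * (1 + C (1 / b ^ 2) * X) - C (yc ^ 2) * (1 + C (1 / a ^ 2) * X) := by
  simp only [charPoly, det_succ_row_zero, Fin.sum_univ_succ, Pmat, Smat]
  simp [Fin.succAbove, Fin.lt_def, submatrix]
  ring

theorem charPoly_eval (a b xc yc zc r l : ℝ) :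
    (charPoly a b xc yc zc r).eval l =
      (1 + l / a ^ 2) * (1 + l / b ^ 2) * (xc ^ 2 + yc ^ 2 + zc ^ 2 - r ^ 2 - (zc + l / 2) ^ 2) -
        xc ^ 2 * (1 + l / b ^ 2) - yc ^ 2 * (1 + l / a ^ 2) := by
  rw [charPoly_eq]
  simp only [eval_sub, eval_mul, eval_add, eval_one, eval_C, eval_X, eval_pow]
  ring

theorem charPoly_eval_zero (a b xc yc zc r : ℝ) : (charPoly a b xc yc zc r).eval 0 = -r ^ 2 := by
  rw [charPoly_eval]
  ring

theorem charPoly_derivative_eval (a b xc yc zc r l : ℝ) :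
    (derivative (charPoly a b xc yc zc r)).eval l =
      (1 / a ^ 2 * (1 + l / b ^ 2) + 1 / b ^ 2 * (1 + l / a ^ 2)) *
          (xc ^ 2 + yc ^ 2 + zc ^ 2 - r ^ 2 - (zc + l / 2) ^ 2) -
        (1 + l / a ^ 2) * (1 + l / b ^ 2) * (zc + l / 2) - xc ^ 2 / b ^ 2 - yc ^ 2 / a ^ 2 := by
  rw [charPoly_eq]
  simp only [derivative_sub, derivative_mul, derivative_add, derivative_one, derivative_C,
    derivative_X, derivative_sq, eval_sub, eval_mul, eval_add, eval_one, eval_C, eval_X,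
    eval_pow, eval_zero]
  ring

theorem Smat_mulVec_eq_neg_smul_Pmat_mulVec (hu : 1 + l / a ^ 2 ≠ 0) (hv : 1 + l / b ^ 2 ≠ 0)
    (hf : (charPoly a b xc yc zc r).IsRoot l) :
    Smat xc yc zc r *ᵥ ![xc / (1 + l / a ^ 2), yc / (1 + l / b ^ 2), zc + l / 2, 1] =
      -l • Pmat a b *ᵥ ![xc / (1 + l / a ^ 2), yc / (1 + l / b ^ 2), zc + l / 2, 1] := by
  rw [IsRoot.def, charPoly_eval] at hf
  ext i
  fin_cases i <;> simp [Pmat, Smat, mulVec, dotProduct, Fin.sum_univ_four] <;> field_simp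
  · ring
  · ring
  · linear_combination 4 * hf

theorem mul_dotProduct_Pmat_mulVec_eq (hu : 1 + l / a ^ 2 ≠ 0) (hv : 1 + l / b ^ 2 ≠ 0) :
    (1 + l / a ^ 2) * (1 + l / b ^ 2) *
        (![xc / (1 + l / a ^ 2), yc / (1 + l / b ^ 2), zc + l / 2, 1] ⬝ᵥ
          Pmat a b *ᵥ ![xc / (1 + l / a ^ 2), yc / (1 + l / b ^ 2), zc + l / 2, 1]) =
      (derivative (charPoly a b xc yc zc r)).eval l -
        (1 / a ^ 2 / (1 + l / a ^ 2) + 1 / b ^ 2 / (1 + l / b ^ 2)) *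
          (charPoly a b xc yc zc r).eval l := by
  rw [charPoly_eval, charPoly_derivative_eval]
  simp [Pmat, mulVec, dotProduct, Fin.sum_univ_four]
  field_simp
  ring

end Quadrics

theorem multiple_root_implies_tangent_general (a b r xc yc zc : ℝ)
    (hr : 0 < r)
    (l : ℝ)
    (hla : l ≠ -a^2) (hlb : l ≠ -b^2)
    (hmult : 2 ≤ rootMultiplicity l (charPoly a b xc yc zc r)) :
    ∃ x y z : ℝ, TangentAt a b xc yc zc r x y z := by
  have hf : (charPoly a b xc yc zc r).IsRoot l :=
    isRoot_iterate_derivative_of_lt_rootMultiplicity (p := charPoly a b xc yc zc r) (n := 0)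
      (by omega)
  have hf' : (derivative (charPoly a b xc yc zc r)).IsRoot l :=
    isRoot_iterate_derivative_of_lt_rootMultiplicity (p := charPoly a b xc yc zc r) (n := 1)
      (by omega)
  have hl : l ≠ 0 := by
    rintro rfl
    rw [IsRoot.def, charPoly_eval_zero, neg_eq_zero] at hf
    exact pow_ne_zero 2 hr.ne' hf
  have hu := one_add_div_sq_ne_zero hla
  have hv := one_add_div_sq_ne_zero hlb
  have hP := mul_dotProduct_Pmat_mulVec_eq (xc := xc) (yc := yc) (zc := zc) (r := r) hu hv
  rw [hf.eq_zero, hf'.eq_zero, mul_zero, sub_zero, mul_eq_zero_iff_left (mul_ne_zero hu hv)] at hP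
  exact ⟨_, _, _, tangentAt_of_Smat_mulVec_eq_smul (neg_ne_zero.2 hl)
    (Smat_mulVec_eq_neg_smul_Pmat_mulVec hu hv hf) hP⟩

/-- (a < b, smallness) a multiple real root different from -a²
and -b² forces the existence of a tangency point. -/
theorem multiple_root_implies_tangent (a b r xc yc zc : ℝ)
    (ha : 0 < a) (hab : a < b) (hr : 0 < r) (hsmall : 2*r ≤ a^2)
    (l : ℝ) (hroot : (charPoly a b xc yc zc r).IsRoot l)
    (hla : l ≠ -a^2) (hlb : l ≠ -b^2)
    (hmult : 2 ≤ rootMultiplicity l (charPoly a b xc yc zc r)) :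
    ∃ x y z : ℝ, TangentAt a b xc yc zc r x y z :=
  multiple_root_implies_tangent_general a b r xc yc zc hr l hla hlb hmult
end

section
/- Assume a < b and x_c = 0 (so that −a² is a root of the characteristic polynomial f). Then −a² is a root of f of multiplicity at least 2 if and only if r² = a²z_c − a²y_c²/(b² − a²) − a⁴/4. -/
open Matrix Polynomial

noncomputable def Gpoly (b yc zc r : ℝ) : Polynomial ℝ :=
  (C (1/b^2) * X + 1) * (C (yc^2+zc^2-r^2) - (C (1/2) * X + C zc)^2) - C (yc^2)

theorem charPoly_factor (a b r yc zc : ℝ) (ha : a ≠ 0) :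
    charPoly a b 0 yc zc r = C (1/a^2) * (X + C (a^2)) * Gpoly b yc zc r := by
  have h1 : (C ((a:ℝ)^2)⁻¹ : Polynomial ℝ) * C a ^ 2 = 1 := by
    rw [← C_pow, ← C_mul, inv_mul_cancel₀ (by positivity), C_1]
  unfold charPoly Pmat Smat Gpoly
  simp [Matrix.det_succ_row_zero, Fin.sum_univ_succ, Matrix.smul_apply, Matrix.map_apply,
    Matrix.cons_val_zero, Matrix.cons_val_one, Matrix.head_cons, smul_eq_mul]
  linear_combination (-((C ((b:ℝ)^2)⁻¹ * X + 1) *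
      (C yc^2 + C zc^2 - C r^2 - (C (2:ℝ)⁻¹ * X + C zc)^2) - C yc^2)) * h1

/-- (a < b, x_c = 0) -a² is a root of f of multiplicity at least 2
iff r² = a²z_c - a²y_c²/(b² - a²) - a⁴/4. -/
theorem neg_a_sq_double_root_iff (a b r yc zc : ℝ)
    (ha : 0 < a) (hab : a < b) (hr : 0 < r) :
    2 ≤ rootMultiplicity (-a^2) (charPoly a b 0 yc zc r) ↔
      r^2 = a^2*zc - a^2*yc^2/(b^2 - a^2) - a^4/4 := by
  have ha' : a ≠ 0 := ne_of_gt ha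
  have hb : b ≠ 0 := ne_of_gt (lt_trans ha hab)
  have hba : (0:ℝ) < b^2 - a^2 := by nlinarith
  have hG : Gpoly b yc zc r ≠ 0 := by
    intro h
    have : (Gpoly b yc zc r).eval 0 = -r^2 := by simp [Gpoly]; ring
    rw [h] at this
    simp at this
    nlinarith
  have hC : (C (1/a^2) : Polynomial ℝ) ≠ 0 := by
    simpa [C_eq_zero] using one_div_ne_zero (pow_ne_zero 2 ha')
  have hX : (X + C (a^2) : Polynomial ℝ) ≠ 0 := X_add_C_ne_zero _
  rw [charPoly_factor a b r yc zc ha',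
    rootMultiplicity_mul (mul_ne_zero (mul_ne_zero hC hX) hG),
    rootMultiplicity_mul (mul_ne_zero hC hX), rootMultiplicity_C]
  have hXC : rootMultiplicity (-a^2) (X + C (a^2) : Polynomial ℝ) = 1 := by
    rw [show (X + C (a^2) : Polynomial ℝ) = X - C (-a^2) by rw [map_neg, sub_neg_eq_add],
      rootMultiplicity_X_sub_C_self]
  rw [hXC]
  have key : (Gpoly b yc zc r).eval (-a^2)
      = ((b^2-a^2) * (a^2*zc - a^2*yc^2/(b^2-a^2) - a^4/4 - r^2))/b^2 := by
    simp [Gpoly]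
    field_simp
    ring
  constructor
  · intro h
    have h1 : 0 < rootMultiplicity (-a^2) (Gpoly b yc zc r) := by omega
    have h2 := (rootMultiplicity_pos hG).mp h1
    rw [IsRoot, key, _root_.div_eq_zero_iff] at h2
    rcases h2 with h2 | h2
    · rcases mul_eq_zero.mp h2 with h3 | h3
      · nlinarith
      · linarith
    · exact absurd h2 (by positivity)
  · intro h
    have h2 : (Gpoly b yc zc r).IsRoot (-a^2) := by
      rw [IsRoot, key, h]; ring
    have := (rootMultiplicity_pos hG).mpr h2
    omega
end
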